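/- arXiv:2010.11928 — 2 statements merged into one kernel-verified Lean document; each statement's English description precedes it below -/
import Mathlib

section
/- Let r ≥ 2 and n, t ≥ 1 be integers and let 𝔉_1,…,𝔉_r ⊆ 𝒫([n]) be shifted r-cross t-intersecting families with maximal necessary intersection point a_*. Let j ∈ [r], F ∈ 𝔉_j, and F_i ∈ 𝔉_i for each i ∈ [r]\{j} be such that |[a_*] ∩ F ∩ ⋂_{i∈[r]\{j}} F_i| = t and a_* ∈ F ∩ ⋂_{i∈[r]\{j}} F_i. Then [a_*] ⊆ F ∪ ⋂_{i∈[r]\{j}} F_i. -/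
open Finset

/-- The shift operation `σ_{ij}` on a set `F ⊆ ℕ`. -/
def shift (i j : ℕ) (F : Finset ℕ) : Finset ℕ :=
  if j ∈ F ∧ i ∉ F then insert i (F.erase j) else F

/-- The shift operation on a family. -/
def shiftFam (i j : ℕ) (𝔉 : Finset (Finset ℕ)) : Finset (Finset ℕ) :=
  𝔉.image (shift i j) ∪ 𝔉.filter (fun F => shift i j F ∈ 𝔉)

/-- A family of subsets of `[n] = {1,…,n}` is shifted. -/
def IsShifted (n : ℕ) (𝔉 : Finset (Finset ℕ)) : Prop :=
  ∀ i j : ℕ, 1 ≤ i → i < j → j ≤ n → ∀ F ∈ 𝔉, shift i j F ∈ 𝔉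

/-- The intersection `⋂_{i ∈ s} G i` (for `s` nonempty). -/
def interOn {r : ℕ} (s : Finset (Fin r)) (G : Fin r → Finset ℕ) : Finset ℕ :=
  (s.sup G).filter fun x => ∀ i ∈ s, x ∈ G i

/-- The intersection `⋂_{i} G i`. -/
def interAll {r : ℕ} (G : Fin r → Finset ℕ) : Finset ℕ :=
  interOn Finset.univ G

/-- Families `𝔉 0, …, 𝔉 (r-1)` are `r`-cross `t`-intersecting. -/
def CrossIntersecting {r : ℕ} (t : ℕ) (𝔉 : Fin r → Finset (Finset ℕ)) : Prop :=
  ∀ G : Fin r → Finset ℕ, (∀ i, G i ∈ 𝔉 i) → t ≤ (interAll G).card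

/-- `a` is a necessary intersection point of the cross `t`-intersecting families `𝔉`. -/
def IsNIP {r : ℕ} (t : ℕ) (𝔉 : Fin r → Finset (Finset ℕ)) (a : ℕ) : Prop :=
  ∃ G : Fin r → Finset ℕ, (∀ i, G i ∈ 𝔉 i) ∧
    (Finset.Icc 1 a ∩ interAll G).card = t ∧ a ∈ interAll G

/-- An intersecting family. -/
def Intersecting' (𝔉 : Finset (Finset ℕ)) : Prop :=
  ∀ F ∈ 𝔉, ∀ F' ∈ 𝔉, (F ∩ F').Nonempty

/-- `a` is a necessary intersection point of the intersecting family `𝔉`. -/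
def IsNIP1 (𝔉 : Finset (Finset ℕ)) (a : ℕ) : Prop :=
  ∃ F ∈ 𝔉, ∃ F' ∈ 𝔉, (Finset.Icc 1 a ∩ F ∩ F').card = 1 ∧ a ∈ F ∩ F'

/-- `A_{n,a,t} = {F ⊆ [n] : |F ∩ [a]| ≥ t}`. -/
def famA (n a t : ℕ) : Finset (Finset ℕ) :=
  (Finset.Icc 1 n).powerset.filter (fun F => t ≤ (F ∩ Finset.Icc 1 a).card)

/-- `B_{n,a} = {F ⊆ [n] : [a] ⊆ F}`. -/
def famB (n a : ℕ) : Finset (Finset ℕ) :=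
  (Finset.Icc 1 n).powerset.filter (fun F => Finset.Icc 1 a ⊆ F)

/-- `F ∈ 𝔉 j` depends on `a`, i.e. `F ∈ 𝔉_j(a)`. -/
def FamDependsOn {r : ℕ} (t : ℕ) (𝔉 : Fin r → Finset (Finset ℕ)) (a : ℕ) (j : Fin r)
    (F : Finset ℕ) : Prop :=
  F ∈ 𝔉 j ∧ ∃ G : Fin r → Finset ℕ, (∀ i, i ≠ j → G i ∈ 𝔉 i) ∧
    (Finset.Icc 1 a ∩ F ∩ interOn (Finset.univ.erase j) G).card = t ∧
    a ∈ F ∩ interOn (Finset.univ.erase j) G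

lemma erase_univ_nonempty {r : ℕ} (hr : 2 ≤ r) (i : Fin r) :
    (Finset.univ.erase i).Nonempty := by
  rw [← Finset.card_pos, Finset.card_erase_of_mem (Finset.mem_univ i),
    Finset.card_univ, Fintype.card_fin]
  omega

/-
A counterexample `b` would let us shift `a_*` out of `F` into `b`: the shifted set meets
`⋂_{i ≠ j} F_i` in the old intersection minus `a_*`, so by cross-intersection the old
intersection has an element above `a_*`. The least such element `c` then sees exactly `t`
intersection points in `[c]`, i.e. it is a necessary intersection point beyond `a_*`.
-/

theorem shift_of_mem_of_notMem {i j : ℕ} {F : Finset ℕ} (hj : j ∈ F) (hi : i ∉ F) :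
    shift i j F = insert i (F.erase j) :=
  if_pos ⟨hj, hi⟩

section interOn

variable {r : ℕ}

theorem mem_interOn {s : Finset (Fin r)} {G : Fin r → Finset ℕ} {x : ℕ} :
    x ∈ interOn s G ↔ s.Nonempty ∧ ∀ i ∈ s, x ∈ G i := by
  simp only [interOn, mem_filter, mem_sup]
  constructor
  · rintro ⟨⟨i, hi, -⟩, h⟩
    exact ⟨⟨i, hi⟩, h⟩
  · rintro ⟨⟨i, hi⟩, h⟩
    exact ⟨⟨i, hi, h i hi⟩, h⟩

theorem interAll_update {j : Fin r} (hj : (univ.erase j).Nonempty) (G : Fin r → Finset ℕ)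
    (H : Finset ℕ) : interAll (Function.update G j H) = H ∩ interOn (univ.erase j) G := by
  ext x
  simp only [interAll, mem_inter, mem_interOn, univ_nonempty_iff.mpr ⟨j⟩, true_and, hj,
    mem_univ, forall_const, mem_erase, ne_eq, and_true]
  exact Function.forall_update_iff G fun _ A => x ∈ A

end interOn

theorem exists_gt_card_Icc_inter_eq_succ {K : Finset ℕ} (hK : ∀ x ∈ K, 1 ≤ x) {a : ℕ}
    (h : (Icc 1 a ∩ K).card < K.card) :
    ∃ c ∈ K, a < c ∧ (Icc 1 c ∩ K).card = (Icc 1 a ∩ K).card + 1 := by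
  set S := K.filter (a < ·)
  have hS : S.Nonempty := by
    obtain ⟨x, hxK, hx⟩ := exists_mem_notMem_of_card_lt_card h
    refine ⟨x, mem_filter.mpr ⟨hxK, ?_⟩⟩
    by_contra! hxa
    exact hx (mem_inter.mpr ⟨mem_Icc.mpr ⟨hK x hxK, hxa⟩, hxK⟩)
  obtain ⟨hcK, hac⟩ := mem_filter.mp (S.min'_mem hS)
  refine ⟨S.min' hS, hcK, hac, ?_⟩
  have hstep : Icc 1 (S.min' hS) ∩ K = insert (S.min' hS) (Icc 1 a ∩ K) := by
    ext x
    simp only [mem_inter, mem_Icc, mem_insert]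
    constructor
    · rintro ⟨⟨hx1, hxc⟩, hxK⟩
      by_cases hxa : x ≤ a
      · exact Or.inr ⟨⟨hx1, hxa⟩, hxK⟩
      · exact Or.inl (le_antisymm hxc (S.min'_le x (mem_filter.mpr ⟨hxK, by omega⟩)))
    · rintro (rfl | ⟨⟨hx1, hxa⟩, hxK⟩)
      · exact ⟨⟨hK _ hcK, le_rfl⟩, hcK⟩
      · exact ⟨⟨hx1, by omega⟩, hxK⟩
  rw [hstep, card_insert_of_notMem fun hc => by simp only [mem_inter, mem_Icc] at hc; omega]

theorem cover_of_depends_witness_general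
    (r n t : ℕ)
    (𝔉 : Fin r → Finset (Finset ℕ)) (hsub : ∀ i, 𝔉 i ⊆ (Finset.Icc 1 n).powerset)
    (hshift : ∀ i, IsShifted n (𝔉 i))
    (hcross : CrossIntersecting t 𝔉)
    (astar : ℕ) (hmax : ∀ b, IsNIP t 𝔉 b → b ≤ astar)
    (j : Fin r) (F : Finset ℕ) (hF : F ∈ 𝔉 j)
    (G : Fin r → Finset ℕ) (hG : ∀ i, i ≠ j → G i ∈ 𝔉 i)
    (hcap : (Finset.Icc 1 astar ∩ F ∩ interOn (Finset.univ.erase j) G).card = t)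
    (hmem : astar ∈ F ∩ interOn (Finset.univ.erase j) G) :
    Finset.Icc 1 astar ⊆ F ∪ interOn (Finset.univ.erase j) G := by
  set I := interOn (univ.erase j) G
  intro b hb
  by_contra hbFI
  simp only [mem_union, not_or] at hbFI
  obtain ⟨hbF, hbI⟩ := hbFI
  obtain ⟨haF, haI⟩ := mem_inter.mp hmem
  have hFn : F ⊆ Icc 1 n := mem_powerset.mp (hsub j hF)
  have hba : b < astar := lt_of_le_of_ne (mem_Icc.mp hb).2 fun h => hbF (h ▸ haF)
  set G' := Function.update G j (shift b astar F)
  have hG' : ∀ i, G' i ∈ 𝔉 i := Function.forall_update_iff G (fun i A => A ∈ 𝔉 i) |>.mpr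
    ⟨hshift j b astar (mem_Icc.mp hb).1 hba (mem_Icc.mp (hFn haF)).2 F hF, hG⟩
  have hinter : interAll G' = (F ∩ I).erase astar := by
    rw [interAll_update (mem_interOn.mp haI).1, shift_of_mem_of_notMem haF hbF]
    ext x
    simp only [mem_inter, mem_insert, mem_erase]
    constructor
    · rintro ⟨rfl | h, hx⟩ <;> tauto
    · tauto
  have haCap : astar ∈ Icc 1 astar ∩ F ∩ I :=
    mem_inter.mpr ⟨mem_inter.mpr ⟨mem_Icc.mpr ⟨(mem_Icc.mp hb).1.trans hba.le, le_rfl⟩, haF⟩, haI⟩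
  have hcap' : (Icc 1 astar ∩ interAll G').card + 1 = t := by
    rw [hinter, inter_erase, ← inter_assoc, card_erase_add_one haCap, hcap]
  obtain ⟨c, hc, hac, hcard⟩ := exists_gt_card_Icc_inter_eq_succ
    (fun x hx => (mem_Icc.mp (hFn (mem_inter.mp (mem_of_mem_erase (hinter ▸ hx))).1)).1)
    (hcap' ▸ hcross G' hG')
  exact absurd (hmax c ⟨G', hG', hcap' ▸ hcard, hc⟩) (by omega)

/-- For shifted `r`-cross `t`-intersecting families with maximal necessary intersection
point `a_*`, witnesses of the dependence on `a_*` cover `[a_*]`. -/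
theorem cover_of_depends_witness
    (r n t : ℕ) (hr : 2 ≤ r) (hn : 1 ≤ n) (ht : 1 ≤ t)
    (𝔉 : Fin r → Finset (Finset ℕ)) (hsub : ∀ i, 𝔉 i ⊆ (Finset.Icc 1 n).powerset)
    (hshift : ∀ i, IsShifted n (𝔉 i))
    (hcross : CrossIntersecting t 𝔉)
    (astar : ℕ) (hNIP : IsNIP t 𝔉 astar) (hmax : ∀ b, IsNIP t 𝔉 b → b ≤ astar)
    (j : Fin r) (F : Finset ℕ) (hF : F ∈ 𝔉 j)
    (G : Fin r → Finset ℕ) (hG : ∀ i, i ≠ j → G i ∈ 𝔉 i)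
    (hcap : (Finset.Icc 1 astar ∩ F ∩ interOn (Finset.univ.erase j) G).card = t)
    (hmem : astar ∈ F ∩ interOn (Finset.univ.erase j) G) :
    Finset.Icc 1 astar ⊆ F ∪ interOn (Finset.univ.erase j) G :=
  cover_of_depends_witness_general r n t 𝔉 hsub hshift hcross astar hmax j F hF G hG hcap hmem
end

section
/- Let r ≥ 2 and n, t ≥ 1 be integers. If 𝔉_1,…,𝔉_r ⊆ 𝒫([n]) are non-empty r-cross t-intersecting families, then there exists a necessary intersection point a ∈ [n] of 𝔉_1,…,𝔉_r, and every necessary intersection point of 𝔉_1,…,𝔉_r is at least t. -/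
open Finset

/-- `F ∈ 𝔉 j` depends on `a`, i.e. `F ∈ 𝔉_j(a)`. -/
def DependsOn' {r : ℕ} (t : ℕ) (𝔉 : Fin r → Finset (Finset ℕ)) (a : ℕ) (j : Fin r)
    (F : Finset ℕ) : Prop :=
  F ∈ 𝔉 j ∧ ∃ G : Fin r → Finset ℕ, (∀ i, i ≠ j → G i ∈ 𝔉 i) ∧
    (Finset.Icc 1 a ∩ F ∩ interOn (Finset.univ.erase j) G).card = t ∧
    a ∈ F ∩ interOn (Finset.univ.erase j) G

theorem Finset.exists_mem_card_filter_le_eq {α : Type*} [LinearOrder α] {S : Finset α} {t : ℕ} (ht : 1 ≤ t)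
    (htS : t ≤ #S) : ∃ a ∈ S, #{x ∈ S | x ≤ a} = t := by
  induction S using Finset.induction_on_max with
  | empty => simp at htS; omega
  | insert m S hlt ih =>
    have hm : m ∉ S := fun hm => lt_irrefl m (hlt m hm)
    rw [card_insert_of_notMem hm] at htS
    rcases Nat.lt_or_ge #S t with hS | hS
    · refine ⟨m, mem_insert_self m S, ?_⟩
      rw [filter_true_of_mem fun x hx => ?_, card_insert_of_notMem hm]
      · omega
      · rcases mem_insert.mp hx with rfl | hx
        exacts [le_rfl, (hlt x hx).le]
    · obtain ⟨a, ha, hcard⟩ := ih hS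
      refine ⟨a, mem_insert_of_mem ha, ?_⟩
      rwa [filter_insert, if_neg (not_le.mpr (hlt a ha))]

theorem interAll_subset_of_forall_subset {r : ℕ} {G : Fin r → Finset ℕ} {U : Finset ℕ}
    (h : ∀ i, G i ⊆ U) : interAll G ⊆ U :=
  (filter_subset _ _).trans (Finset.sup_le fun i _ => h i)

theorem Icc_one_inter_eq_filter_le {S : Finset ℕ} (hS : 0 ∉ S) (a : ℕ) :
    Icc 1 a ∩ S = {x ∈ S | x ≤ a} := by
  ext x
  have : x ∈ S → 1 ≤ x := fun hx => Nat.one_le_iff_ne_zero.mpr fun h => hS (h ▸ hx)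
  simp only [mem_inter, mem_Icc, mem_filter]
  tauto

theorem IsNIP.le {r t : ℕ} {𝔉 : Fin r → Finset (Finset ℕ)} {a : ℕ} (h : IsNIP t 𝔉 a) :
    t ≤ a := by
  obtain ⟨G, -, hcard, -⟩ := h
  calc t = #(Icc 1 a ∩ interAll G) := hcard.symm
    _ ≤ #(Icc 1 a) := card_le_card inter_subset_left
    _ = a := by simp

theorem exists_nip_and_nip_ge_general
    (r n t : ℕ) (ht : 1 ≤ t)
    (𝔉 : Fin r → Finset (Finset ℕ)) (hsub : ∀ i, 𝔉 i ⊆ (Finset.Icc 1 n).powerset)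
    (hne : ∀ i, (𝔉 i).Nonempty) (hcross : CrossIntersecting t 𝔉) :
    (∃ a : ℕ, 1 ≤ a ∧ a ≤ n ∧ IsNIP t 𝔉 a) ∧ (∀ a : ℕ, IsNIP t 𝔉 a → t ≤ a) := by
  refine ⟨?_, fun a ha => ha.le⟩
  choose G hG using hne
  have hS : interAll G ⊆ Icc 1 n :=
    interAll_subset_of_forall_subset fun i => mem_powerset.mp (hsub i (hG i))
  -- `a` is the `t`-th smallest point of `⋂ G i`
  obtain ⟨a, ha, hcard⟩ := exists_mem_card_filter_le_eq ht (hcross G hG)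
  obtain ⟨ha₁, han⟩ := mem_Icc.mp (hS ha)
  refine ⟨a, ha₁, han, G, hG, ?_, ha⟩
  rwa [Icc_one_inter_eq_filter_le fun h0 => by simpa using hS h0]

/-- Non-empty `r`-cross `t`-intersecting families have a necessary intersection point,
and every necessary intersection point is at least `t`. -/
theorem exists_nip_and_nip_ge
    (r n t : ℕ) (hr : 2 ≤ r) (hn : 1 ≤ n) (ht : 1 ≤ t)
    (𝔉 : Fin r → Finset (Finset ℕ)) (hsub : ∀ i, 𝔉 i ⊆ (Finset.Icc 1 n).powerset)
    (hne : ∀ i, (𝔉 i).Nonempty) (hcross : CrossIntersecting t 𝔉) :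
    (∃ a : ℕ, 1 ≤ a ∧ a ≤ n ∧ IsNIP t 𝔉 a) ∧ (∀ a : ℕ, IsNIP t 𝔉 a → t ≤ a) :=
  exists_nip_and_nip_ge_general r n t ht 𝔉 hsub hne hcross
end
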